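/- arXiv:2305.19706 — 8 statements merged into one kernel-verified Lean document; each statement's English description precedes it below -/
import Mathlib

section
/- Let V be a type with an irreflexive, transitive dominance relation ≻, a combining operator ⊕ : V → V → V, and feasibility predicates c₁, c₂ (for the two child subproblems) and c (for the parent). If ⊕ preserves order over ≻ with respect to (c₁, c₂, c) (Definition 3) and the constraint triple (c₁, c₂, c) is anti-monotonic (Definition 4), then the splitting property (principle of optimality) holds: for all finite sets Θ₁, Θ₂ ⊆ V, opt_c(merge(Θ₁, Θ₂)) = opt_c(merge(opt_{c₁}(Θ₁), opt_{c₂}(Θ₂))). (Sufficiency direction of Theorem 1 of the paper.) -/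
/-- The nondominated elements of a set `Θ` under dominance relation `r`. -/
def nondom {V : Type*} (r : V → V → Prop) (Θ : Set V) : Set V :=
  {v ∈ Θ | ¬ ∃ v' ∈ Θ, r v' v}

/-- The optimal (feasible and nondominated) elements of `Θ` under constraint `c`. -/
def opt {V : Type*} (r : V → V → Prop) (c : V → Prop) (Θ : Set V) : Set V :=
  nondom r {v ∈ Θ | c v}

/-- All combinations of elements of `Θ₁` and `Θ₂` under the combining operator `op`. -/
def merge {V : Type*} (op : V → V → V) (Θ₁ Θ₂ : Set V) : Set V :=
  Set.image2 op Θ₁ Θ₂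

/-- Definition 3: `op` preserves order over `r` with respect to `(c₁, c₂, c)`. -/
def OrderPreserving {V : Type*} (r : V → V → Prop) (op : V → V → V)
    (c₁ c₂ c : V → Prop) : Prop :=
  ∀ Θ₁ Θ₂ : Set V, Θ₁.Finite → Θ₂.Finite →
    (∀ v₁ ∈ opt r c₁ Θ₁, ∀ v₁' ∈ Θ₁, r v₁ v₁' → ∀ v₂ ∈ opt r c₂ Θ₂,
        r (op v₁ v₂) (op v₁' v₂) ∧ op v₁' v₂ ∉ opt r c (merge op Θ₁ Θ₂)) ∧
    (∀ v₂ ∈ opt r c₂ Θ₂, ∀ v₂' ∈ Θ₂, r v₂ v₂' → ∀ v₁ ∈ opt r c₁ Θ₁,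
        r (op v₁ v₂) (op v₁ v₂') ∧ op v₁ v₂' ∉ opt r c (merge op Θ₁ Θ₂))

/-- Definition 4: the constraint triple `(c₁, c₂, c)` is anti-monotonic. -/
def AntiMonotonic {V : Type*} (r : V → V → Prop) (op : V → V → V)
    (c₁ c₂ c : V → Prop) : Prop :=
  ∀ Θ₁ Θ₂ : Set V, Θ₁.Finite → Θ₂.Finite →
    ∀ v₁ ∈ Θ₁, ∀ v₂ ∈ Θ₂, (¬ c₁ v₁ ∨ ¬ c₂ v₂) →
      op v₁ v₂ ∉ opt r c (merge op Θ₁ Θ₂)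

/-- Any feasible element of a finite set is (weakly) dominated by an optimal element. -/
lemma exists_opt_ge {V : Type*} (r : V → V → Prop) (hirr : ∀ v, ¬ r v v)
    (htrans : ∀ ⦃a b c⦄, r a b → r b c → r a c) (c : V → Prop)
    {Θ : Set V} (hfin : Θ.Finite) {v : V} (hv : v ∈ Θ) (hc : c v) :
    ∃ w ∈ opt r c Θ, w = v ∨ r w v := by
  haveI : IsIrrefl V r := ⟨hirr⟩
  haveI : IsTrans V r := ⟨fun a b c hab hbc => htrans hab hbc⟩
  haveI : IsStrictOrder V r := ⟨⟩
  set S : Set V := {u ∈ Θ | c u ∧ (u = v ∨ r u v)} with hS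
  have hSfin : S.Finite := hfin.subset (fun u hu => hu.1)
  have hwf : WellFounded fun a b : V => r a b ∧ a ∈ S ∧ b ∈ S :=
    (Set.wellFoundedOn_iff.mp hSfin.wellFoundedOn)
  obtain ⟨m, hmS, hmin⟩ := hwf.has_min S ⟨v, hv, hc, Or.inl rfl⟩
  refine ⟨m, ⟨⟨hmS.1, hmS.2.1⟩, ?_⟩, hmS.2.2⟩
  rintro ⟨x, ⟨hxΘ, hxc⟩, hxm⟩
  have hxS : x ∈ S := by
    refine ⟨hxΘ, hxc, Or.inr ?_⟩
    rcases hmS.2.2 with h | h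
    · exact h ▸ hxm
    · exact htrans hxm h
  exact hmin x hxS ⟨hxm, hxS, hmS⟩

lemma opt_mono_mem {V : Type*} (r : V → V → Prop) (c : V → Prop)
    {S T : Set V} (hST : S ⊆ T) {x : V} (hx : x ∈ opt r c T) (hxS : x ∈ S) :
    x ∈ opt r c S := by
  refine ⟨⟨hxS, hx.1.2⟩, fun ⟨y, hy, hyx⟩ => hx.2 ⟨y, ⟨hST hy.1, hy.2⟩, hyx⟩⟩

/-- Sufficiency direction of Theorem 1: order preservation and anti-monotonicity
imply the splitting property (principle of optimality). -/
theorem splitting_of_orderPreserving_antiMonotonic {V : Type*}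
    (r : V → V → Prop) (hirr : ∀ v, ¬ r v v)
    (htrans : ∀ ⦃a b c⦄, r a b → r b c → r a c)
    (op : V → V → V) (c₁ c₂ c : V → Prop)
    (hop : OrderPreserving r op c₁ c₂ c)
    (ham : AntiMonotonic r op c₁ c₂ c) :
    ∀ Θ₁ Θ₂ : Set V, Θ₁.Finite → Θ₂.Finite →
      opt r c (merge op Θ₁ Θ₂) =
        opt r c (merge op (opt r c₁ Θ₁) (opt r c₂ Θ₂)) := by
  intro Θ₁ Θ₂ h₁ h₂
  set O₁ := opt r c₁ Θ₁ with hO₁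
  set O₂ := opt r c₂ Θ₂ with hO₂
  have hO₁sub : O₁ ⊆ Θ₁ := fun u hu => hu.1.1
  have hO₂sub : O₂ ⊆ Θ₂ := fun u hu => hu.1.1
  have hmsub : merge op O₁ O₂ ⊆ merge op Θ₁ Θ₂ :=
    Set.image2_subset hO₁sub hO₂sub
  -- key claim: every element of the big opt set lies in merge O₁ O₂
  have key : ∀ x ∈ opt r c (merge op Θ₁ Θ₂), x ∈ merge op O₁ O₂ := by
    rintro x hx
    obtain ⟨v₁, hv₁, v₂, hv₂, rfl⟩ := hx.1.1
    have hc₁ : c₁ v₁ := by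
      by_contra h
      exact ham Θ₁ Θ₂ h₁ h₂ v₁ hv₁ v₂ hv₂ (Or.inl h) hx
    have hc₂ : c₂ v₂ := by
      by_contra h
      exact ham Θ₁ Θ₂ h₁ h₂ v₁ hv₁ v₂ hv₂ (Or.inr h) hx
    obtain ⟨w₁, hw₁, hw₁v⟩ := exists_opt_ge r hirr htrans c₁ h₁ hv₁ hc₁
    obtain ⟨w₂, hw₂, hw₂v⟩ := exists_opt_ge r hirr htrans c₂ h₂ hv₂ hc₂
    -- v₁ is optimal
    have hv₁O : v₁ ∈ O₁ := by
      rcases hw₁v with rfl | hdom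
      · exact hw₁
      · exfalso
        -- use order preservation with Θ₂' = {v₂}
        have hv₂opt : v₂ ∈ opt r c₂ {v₂} := by
          refine ⟨⟨rfl, hc₂⟩, ?_⟩
          rintro ⟨y, ⟨hy, -⟩, hyv⟩
          exact hirr v₂ (hy ▸ hyv)
        have := ((hop Θ₁ {v₂} h₁ (Set.finite_singleton v₂)).1
          w₁ hw₁ v₁ hv₁ hdom v₂ hv₂opt).2
        exact this (opt_mono_mem r c
          (Set.image2_subset (le_refl Θ₁) (Set.singleton_subset_iff.mpr hv₂)) hx
          ⟨v₁, hv₁, v₂, rfl, rfl⟩)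
    have hv₂O : v₂ ∈ O₂ := by
      rcases hw₂v with rfl | hdom
      · exact hw₂
      · exfalso
        have hv₁opt : v₁ ∈ opt r c₁ {v₁} := by
          refine ⟨⟨rfl, hc₁⟩, ?_⟩
          rintro ⟨y, ⟨hy, -⟩, hyv⟩
          exact hirr v₁ (hy ▸ hyv)
        have := ((hop {v₁} Θ₂ (Set.finite_singleton v₁) h₂).2
          w₂ hw₂ v₂ hv₂ hdom v₁ hv₁opt).2
        exact this (opt_mono_mem r c
          (Set.image2_subset (Set.singleton_subset_iff.mpr hv₁) (le_refl Θ₂)) hx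
          ⟨v₁, rfl, v₂, hv₂, rfl⟩)
    exact ⟨v₁, hv₁O, v₂, hv₂O, rfl⟩
  apply Set.Subset.antisymm
  · intro x hx
    exact opt_mono_mem r c hmsub hx (key x hx)
  · intro x hx
    refine ⟨⟨hmsub hx.1.1, hx.1.2⟩, ?_⟩
    rintro ⟨y, ⟨hym, hyc⟩, hyx⟩
    -- find an optimal dominator of x in the big merge
    have hmfin : (merge op Θ₁ Θ₂).Finite := h₁.image2 op h₂
    obtain ⟨z, hz, hzy⟩ := exists_opt_ge r hirr htrans c hmfin hym hyc
    have hzx : r z x := by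
      rcases hzy with rfl | h
      · exact hyx
      · exact htrans h hyx
    exact hx.2 ⟨z, ⟨key z hz, hz.1.2⟩, hzx⟩
end

section
/- Let V be a type with an irreflexive, transitive dominance relation ≻, a combining operator ⊕, and feasibility predicates c₁, c₂, c. If ⊕ preserves order over ≻ with respect to (c₁, c₂, c) (Definition 3) and the constraint triple (c₁, c₂, c) is anti-monotonic (Definition 4), then for all finite sets Θ₁, Θ₂ ⊆ V one has the inclusion opt_c(merge(Θ₁, Θ₂)) ⊆ merge(opt_{c₁}(Θ₁), opt_{c₂}(Θ₂)): every optimal combined solution value can be written as v₁ ⊕ v₂ with v₁ an optimal solution of the first subproblem and v₂ an optimal solution of the second. (Subset direction, Eq. (29)-(30), in the proof of Theorem 1.) -/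
/-- Subset direction (Eq. (29)-(30)) in the proof of Theorem 1: every optimal
combined solution is a combination of optimal subproblem solutions. -/
theorem opt_merge_subset_merge_opt {V : Type*}
    (r : V → V → Prop) (hirr : ∀ v, ¬ r v v)
    (htrans : ∀ ⦃a b c⦄, r a b → r b c → r a c)
    (op : V → V → V) (c₁ c₂ c : V → Prop)
    (hop : OrderPreserving r op c₁ c₂ c)
    (ham : AntiMonotonic r op c₁ c₂ c) :
    ∀ Θ₁ Θ₂ : Set V, Θ₁.Finite → Θ₂.Finite →
      opt r c (merge op Θ₁ Θ₂) ⊆ merge op (opt r c₁ Θ₁) (opt r c₂ Θ₂) := by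
  -- auxiliary: in a finite set, every element is reached from a nondominated one
  have reach : ∀ S : Set V, S.Finite → ∀ v ∈ S,
      ∃ w ∈ nondom r S, w = v ∨ r w v := by
    intro S hS
    have key : ∀ n : ℕ, ∀ v ∈ S, ({w ∈ S | r w v}).ncard ≤ n →
        ∃ w ∈ nondom r S, w = v ∨ r w v := by
      intro n
      induction n with
      | zero =>
        intro v hv hcard
        refine ⟨v, ⟨hv, ?_⟩, Or.inl rfl⟩
        rintro ⟨v', hv', hr⟩
        have hne : ({w ∈ S | r w v}).Nonempty := ⟨v', hv', hr⟩
        have := (Set.ncard_pos (hS.subset (Set.sep_subset _ _))).2 hne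
        omega
      | succ n ih =>
        intro v hv hcard
        by_cases hnd : ∃ v' ∈ S, r v' v
        · obtain ⟨v', hv', hr⟩ := hnd
          have hsub : {w ∈ S | r w v'} ⊆ {w ∈ S | r w v} := by
            rintro w ⟨hw, hrw⟩; exact ⟨hw, htrans hrw hr⟩
          have hnotmem : v' ∉ {w ∈ S | r w v'} := fun h => hirr v' h.2
          have hmem : v' ∈ {w ∈ S | r w v} := ⟨hv', hr⟩
          have hlt : ({w ∈ S | r w v'}).ncard < ({w ∈ S | r w v}).ncard := by
            apply Set.ncard_lt_ncard ⟨hsub, fun h => hnotmem (h hmem)⟩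
              (hS.subset (Set.sep_subset _ _))
          obtain ⟨w, hw, hwe⟩ := ih v' hv' (by omega)
          refine ⟨w, hw, Or.inr ?_⟩
          rcases hwe with rfl | h
          · exact hr
          · exact htrans h hr
        · exact ⟨v, ⟨hv, hnd⟩, Or.inl rfl⟩
    intro v hv; exact key _ v hv le_rfl
  intro Θ₁ Θ₂ h1 h2 v hv
  obtain ⟨⟨hvm, hvc⟩, hvnd⟩ := hv
  obtain ⟨v₁, hv₁, v₂, hv₂, rfl⟩ := hvm
  -- feasibility of the components via anti-monotonicity
  have hc₁ : c₁ v₁ := by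
    by_contra h
    exact ham Θ₁ Θ₂ h1 h2 v₁ hv₁ v₂ hv₂ (Or.inl h) ⟨⟨⟨v₁, hv₁, v₂, hv₂, rfl⟩, hvc⟩, hvnd⟩
  have hc₂ : c₂ v₂ := by
    by_contra h
    exact ham Θ₁ Θ₂ h1 h2 v₁ hv₁ v₂ hv₂ (Or.inr h) ⟨⟨⟨v₁, hv₁, v₂, hv₂, rfl⟩, hvc⟩, hvnd⟩
  -- singleton optimality facts
  have hopt₁s : v₁ ∈ opt r c₁ {v₁} := by
    refine ⟨⟨rfl, hc₁⟩, ?_⟩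
    rintro ⟨w, ⟨hw, -⟩, hrw⟩
    rw [Set.mem_singleton_iff] at hw
    subst hw; exact hirr _ hrw
  have hopt₂s : v₂ ∈ opt r c₂ {v₂} := by
    refine ⟨⟨rfl, hc₂⟩, ?_⟩
    rintro ⟨w, ⟨hw, -⟩, hrw⟩
    rw [Set.mem_singleton_iff] at hw
    subst hw; exact hirr _ hrw
  -- v₁ is optimal in Θ₁
  have hopt₁ : v₁ ∈ opt r c₁ Θ₁ := by
    obtain ⟨w, hw, hwe⟩ := reach {x ∈ Θ₁ | c₁ x} (h1.subset (Set.sep_subset _ _)) v₁ ⟨hv₁, hc₁⟩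
    rcases hwe with rfl | hrw
    · exact hw
    · exfalso
      have := ((hop Θ₁ {v₂} h1 (Set.finite_singleton v₂)).1 w hw v₁ hv₁ hrw v₂ hopt₂s).2
      have hmem : op v₁ v₂ ∈ {x ∈ merge op Θ₁ {v₂} | c x} :=
        ⟨⟨v₁, hv₁, v₂, rfl, rfl⟩, hvc⟩
      have hdom : ∃ w' ∈ {x ∈ merge op Θ₁ {v₂} | c x}, r w' (op v₁ v₂) := by
        by_contra hno
        exact this ⟨hmem, hno⟩
      obtain ⟨w', ⟨⟨a, ha, b, hb, rfl⟩, hcw'⟩, hrw'⟩ := hdom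
      rw [Set.mem_singleton_iff] at hb
      rw [hb] at hrw' hcw'
      exact hvnd ⟨op a v₂, ⟨⟨a, ha, v₂, hv₂, rfl⟩, hcw'⟩, hrw'⟩
  -- v₂ is optimal in Θ₂
  have hopt₂ : v₂ ∈ opt r c₂ Θ₂ := by
    obtain ⟨w, hw, hwe⟩ := reach {x ∈ Θ₂ | c₂ x} (h2.subset (Set.sep_subset _ _)) v₂ ⟨hv₂, hc₂⟩
    rcases hwe with rfl | hrw
    · exact hw
    · exfalso
      have := ((hop {v₁} Θ₂ (Set.finite_singleton v₁) h2).2 w hw v₂ hv₂ hrw v₁ hopt₁s).2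
      have hmem : op v₁ v₂ ∈ {x ∈ merge op {v₁} Θ₂ | c x} :=
        ⟨⟨v₁, rfl, v₂, hv₂, rfl⟩, hvc⟩
      have hdom : ∃ w' ∈ {x ∈ merge op {v₁} Θ₂ | c x}, r w' (op v₁ v₂) := by
        by_contra hno
        exact this ⟨hmem, hno⟩
      obtain ⟨w', ⟨⟨a, ha, b, hb, rfl⟩, hcw'⟩, hrw'⟩ := hdom
      rw [Set.mem_singleton_iff] at ha
      rw [ha] at hrw' hcw'
      exact hvnd ⟨op v₁ b, ⟨⟨v₁, hv₁, b, hb, rfl⟩, hcw'⟩, hrw'⟩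
  exact ⟨v₁, hopt₁, v₂, hopt₂, rfl⟩
end

section
/- Let V be a type with an irreflexive, transitive dominance relation ≻, a combining operator ⊕, and feasibility predicates c₁, c₂, c. Suppose ⊕ preserves order over ≻ with respect to (c₁, c₂, c) (Definition 3) and (c₁, c₂, c) is anti-monotonic (Definition 4). Then for all finite sets Θ₁, Θ₂ ⊆ V one has the reverse inclusion opt_c(merge(opt_{c₁}(Θ₁), opt_{c₂}(Θ₂))) ⊆ opt_c(merge(Θ₁, Θ₂)): every value that is optimal among combinations of optimal subproblem solutions is optimal among all combinations. (Superset direction, Eq. (33), in the proof of Theorem 1.) -/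
lemma exists_max_above {V : Type*} (r : V → V → Prop)
    (hirr : ∀ v, ¬ r v v) (htrans : ∀ ⦃a b c⦄, r a b → r b c → r a c)
    {S : Set V} (hS : S.Finite) :
    ∀ w ∈ S, ∃ t ∈ S, (t = w ∨ r t w) ∧ ∀ x ∈ S, ¬ r x t := by
  classical
  have key : ∀ n : ℕ, ∀ w ∈ S, (hS.toFinset.filter (fun x => r x w)).card ≤ n →
      ∃ t ∈ S, (t = w ∨ r t w) ∧ ∀ x ∈ S, ¬ r x t := by
    intro n
    induction n with
    | zero =>
      intro w hw hcard
      refine ⟨w, hw, Or.inl rfl, fun x hx hr => ?_⟩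
      have : x ∈ hS.toFinset.filter (fun x => r x w) := by
        simp [Set.Finite.mem_toFinset, hx, hr]
      simp [Finset.card_eq_zero.mp (Nat.le_zero.mp hcard)] at this
    | succ n ih =>
      intro w hw hcard
      by_cases h : ∃ x ∈ S, r x w
      · obtain ⟨x, hx, hxw⟩ := h
        have hsub : hS.toFinset.filter (fun y => r y x) ⊂ hS.toFinset.filter (fun y => r y w) := by
          refine Finset.ssubset_iff_of_subset ?_ |>.mpr ?_
          · intro y hy
            simp only [Finset.mem_filter, Set.Finite.mem_toFinset] at hy ⊢
            exact ⟨hy.1, htrans hy.2 hxw⟩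
          · exact ⟨x, by simp [Set.Finite.mem_toFinset, hx, hxw], by simp [hirr x]⟩
        have hlt : (hS.toFinset.filter (fun y => r y x)).card < n + 1 :=
          lt_of_lt_of_le (Finset.card_lt_card hsub) hcard
        obtain ⟨t, ht, hor, hmax⟩ := ih x hx (Nat.lt_succ_iff.mp hlt)
        refine ⟨t, ht, Or.inr ?_, hmax⟩
        rcases hor with rfl | htx
        · exact hxw
        · exact htrans htx hxw
      · exact ⟨w, hw, Or.inl rfl, fun x hx hr => h ⟨x, hx, hr⟩⟩
  intro w hw
  exact key _ w hw le_rfl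

lemma mem_opt_iff {V : Type*} {r : V → V → Prop} {c : V → Prop} {Θ : Set V} {v : V} :
    v ∈ opt r c Θ ↔ (v ∈ Θ ∧ c v) ∧ ¬ ∃ v' , (v' ∈ Θ ∧ c v') ∧ r v' v := by
  exact Iff.rfl


/-- Superset direction (Eq. (33)) in the proof of Theorem 1: every value optimal
among combinations of optimal subproblem solutions is optimal among all combinations. -/
theorem opt_merge_opt_subset_opt_merge {V : Type*}
    (r : V → V → Prop) (hirr : ∀ v, ¬ r v v)
    (htrans : ∀ ⦃a b c⦄, r a b → r b c → r a c)
    (op : V → V → V) (c₁ c₂ c : V → Prop)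
    (hop : OrderPreserving r op c₁ c₂ c)
    (ham : AntiMonotonic r op c₁ c₂ c) :
    ∀ Θ₁ Θ₂ : Set V, Θ₁.Finite → Θ₂.Finite →
      opt r c (merge op (opt r c₁ Θ₁) (opt r c₂ Θ₂)) ⊆ opt r c (merge op Θ₁ Θ₂) := by
  intro Θ₁ Θ₂ h1 h2 v hv
  rw [mem_opt_iff] at hv
  obtain ⟨⟨hvmem, hvc⟩, hvnd⟩ := hv
  have hO₁ : opt r c₁ Θ₁ ⊆ Θ₁ := fun x hx => (mem_opt_iff.mp hx).1.1
  have hO₂ : opt r c₂ Θ₂ ⊆ Θ₂ := fun x hx => (mem_opt_iff.mp hx).1.1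
  have hvmem' : v ∈ merge op Θ₁ Θ₂ := Set.image2_subset hO₁ hO₂ hvmem
  rw [mem_opt_iff]
  refine ⟨⟨hvmem', hvc⟩, ?_⟩
  rintro ⟨w, ⟨hwmem, hwc⟩, hrwv⟩
  -- the feasible elements of merge Θ₁ Θ₂
  set S : Set V := {x ∈ merge op Θ₁ Θ₂ | c x} with hSdef
  have hSfin : S.Finite := (Set.Finite.image2 op h1 h2).subset (Set.sep_subset _ _)
  obtain ⟨t, htS, htw, htmax⟩ := exists_max_above r hirr htrans hSfin w ⟨hwmem, hwc⟩
  obtain ⟨htmem, htc⟩ := htS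
  have hrtv : r t v := by
    rcases htw with rfl | h
    · exact hrwv
    · exact htrans h hrwv
  have htopt : t ∈ opt r c (merge op Θ₁ Θ₂) := by
    rw [mem_opt_iff]
    exact ⟨⟨htmem, htc⟩, fun ⟨x, hx, hrx⟩ => htmax x hx hrx⟩
  obtain ⟨t₁, ht₁, t₂, ht₂, rfl⟩ := htmem
  have hc₁ : c₁ t₁ := by
    by_contra h
    exact ham Θ₁ Θ₂ h1 h2 t₁ ht₁ t₂ ht₂ (Or.inl h) htopt
  have hc₂ : c₂ t₂ := by
    by_contra h
    exact ham Θ₁ Θ₂ h1 h2 t₁ ht₁ t₂ ht₂ (Or.inr h) htopt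
  -- singleton opts
  have ht₂singleton : t₂ ∈ opt r c₂ ({t₂} : Set V) := by
    rw [mem_opt_iff]
    exact ⟨⟨rfl, hc₂⟩, fun ⟨x, ⟨hx, _⟩, hrx⟩ => hirr t₂ (hx ▸ hrx)⟩
  have ht₁singleton : t₁ ∈ opt r c₁ ({t₁} : Set V) := by
    rw [mem_opt_iff]
    exact ⟨⟨rfl, hc₁⟩, fun ⟨x, ⟨hx, _⟩, hrx⟩ => hirr t₁ (hx ▸ hrx)⟩
  -- t₁ is optimal in Θ₁
  have ht₁opt : t₁ ∈ opt r c₁ Θ₁ := by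
    by_contra h
    rw [mem_opt_iff] at h
    push_neg at h
    obtain ⟨s, ⟨hsmem, hsc⟩, hrs⟩ := h ⟨ht₁, hc₁⟩
    obtain ⟨s₁, hs₁F, hs₁s, hs₁max⟩ := exists_max_above r hirr htrans
      (h1.subset (Set.sep_subset _ _)) s ⟨hsmem, hsc⟩
    have hs₁opt : s₁ ∈ opt r c₁ Θ₁ := by
      rw [mem_opt_iff]
      exact ⟨⟨hs₁F.1, hs₁F.2⟩, fun ⟨x, hx, hrx⟩ => hs₁max x hx hrx⟩
    have hrs₁t₁ : r s₁ t₁ := by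
      rcases hs₁s with rfl | h'
      · exact hrs
      · exact htrans h' hrs
    have := ((hop Θ₁ {t₂} h1 (Set.finite_singleton t₂)).1 s₁ hs₁opt t₁ ht₁ hrs₁t₁
      t₂ ht₂singleton).2
    apply this
    rw [mem_opt_iff]
    refine ⟨⟨⟨t₁, ht₁, t₂, rfl, rfl⟩, htc⟩, ?_⟩
    rintro ⟨x, ⟨hxmem, hxc⟩, hrx⟩
    have : x ∈ merge op Θ₁ Θ₂ := Set.image2_subset (subset_refl _)
      (by simpa using ht₂ : ({t₂} : Set V) ⊆ Θ₂) hxmem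
    exact htmax x ⟨this, hxc⟩ hrx
  -- t₂ is optimal in Θ₂
  have ht₂opt : t₂ ∈ opt r c₂ Θ₂ := by
    by_contra h
    rw [mem_opt_iff] at h
    push_neg at h
    obtain ⟨s, ⟨hsmem, hsc⟩, hrs⟩ := h ⟨ht₂, hc₂⟩
    obtain ⟨s₂, hs₂F, hs₂s, hs₂max⟩ := exists_max_above r hirr htrans
      (h2.subset (Set.sep_subset _ _)) s ⟨hsmem, hsc⟩
    have hs₂opt : s₂ ∈ opt r c₂ Θ₂ := by
      rw [mem_opt_iff]
      exact ⟨⟨hs₂F.1, hs₂F.2⟩, fun ⟨x, hx, hrx⟩ => hs₂max x hx hrx⟩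
    have hrs₂t₂ : r s₂ t₂ := by
      rcases hs₂s with rfl | h'
      · exact hrs
      · exact htrans h' hrs
    have := ((hop {t₁} Θ₂ (Set.finite_singleton t₁) h2).2 s₂ hs₂opt t₂ ht₂ hrs₂t₂
      t₁ ht₁singleton).2
    apply this
    rw [mem_opt_iff]
    refine ⟨⟨⟨t₁, rfl, t₂, ht₂, rfl⟩, htc⟩, ?_⟩
    rintro ⟨x, ⟨hxmem, hxc⟩, hrx⟩
    have : x ∈ merge op Θ₁ Θ₂ := Set.image2_subset
      (by simpa using ht₁ : ({t₁} : Set V) ⊆ Θ₁) (subset_refl _) hxmem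
    exact htmax x ⟨this, hxc⟩ hrx
  -- contradiction with v nondominated in merge of opts
  exact hvnd ⟨op t₁ t₂, ⟨⟨t₁, ht₁opt, t₂, ht₂opt, rfl⟩, htc⟩, hrtv⟩
end

section
/- Let V be a type with an irreflexive, transitive dominance relation ≻ and a combining operator ⊕, and take all feasibility predicates to be trivially true (no constraints), so that opt(Θ) = nondom(Θ). If the splitting property holds for all finite sets, i.e. nondom(merge(Θ₁, Θ₂)) = nondom(merge(nondom(Θ₁), nondom(Θ₂))) for all finite Θ₁, Θ₂ ⊆ V, then ⊕ is order preserving up to equality: for all v₁, v₁', v₂ ∈ V with v₁ ≻ v₁', one has v₁ ⊕ v₂ ≽ v₁' ⊕ v₂ (that is, v₁ ⊕ v₂ ≻ v₁' ⊕ v₂ or v₁ ⊕ v₂ = v₁' ⊕ v₂), and likewise v₂ ⊕ v₁ ≽ v₂ ⊕ v₁'. (Necessity of order preservation, from the necessity direction of the proof of Theorem 1.) -/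
/-- Necessity of order preservation (from the necessity direction of the proof of
Theorem 1): if the splitting property holds for all finite sets (with trivially true
constraints, so `opt = nondom`), then the combining operator is order preserving up
to equality. -/
theorem orderPreserving_of_splitting {V : Type*}
    (r : V → V → Prop) (hirr : ∀ v, ¬ r v v)
    (htrans : ∀ ⦃a b c⦄, r a b → r b c → r a c)
    (op : V → V → V)
    (hsplit : ∀ Θ₁ Θ₂ : Set V, Θ₁.Finite → Θ₂.Finite →
      nondom r (merge op Θ₁ Θ₂) =
        nondom r (merge op (nondom r Θ₁) (nondom r Θ₂))) :
    ∀ v₁ v₁' v₂ : V, r v₁ v₁' →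
      (r (op v₁ v₂) (op v₁' v₂) ∨ op v₁ v₂ = op v₁' v₂) ∧
      (r (op v₂ v₁) (op v₂ v₁') ∨ op v₂ v₁ = op v₂ v₁') := by
  intro v₁ v₁' v₂ h
  have hpair : nondom r ({v₁, v₁'} : Set V) ⊆ {v₁} := by
    rintro x ⟨hx, hnd⟩
    rcases hx with rfl | rfl
    · rfl
    · exact absurd ⟨v₁, Or.inl rfl, h⟩ hnd
  have hsingle : ∀ v : V, nondom r ({v} : Set V) ⊆ {v} := fun v x hx => hx.1
  constructor
  · by_contra hc
    push_neg at hc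
    obtain ⟨hnr, hne⟩ := hc
    have hmem : op v₁' v₂ ∈ nondom r (merge op ({v₁, v₁'} : Set V) {v₂}) := by
      refine ⟨⟨v₁', Or.inr rfl, v₂, rfl, rfl⟩, ?_⟩
      rintro ⟨w, ⟨a, ha, b, rfl, rfl⟩, hw⟩
      rcases ha with rfl | rfl
      · exact hnr hw
      · exact hirr _ hw
    rw [hsplit _ _ ((Set.finite_singleton _).insert _) (Set.finite_singleton _)] at hmem
    obtain ⟨⟨a, ha, b, hb, heq⟩, _⟩ := hmem
    have ha' : a = v₁ := hpair ha
    have hb' : b = v₂ := hsingle _ hb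
    subst ha'; subst hb'
    exact hne heq
  · by_contra hc
    push_neg at hc
    obtain ⟨hnr, hne⟩ := hc
    have hmem : op v₂ v₁' ∈ nondom r (merge op ({v₂} : Set V) ({v₁, v₁'} : Set V)) := by
      refine ⟨⟨v₂, rfl, v₁', Or.inr rfl, rfl⟩, ?_⟩
      rintro ⟨w, ⟨a, rfl, b, hb, rfl⟩, hw⟩
      rcases hb with rfl | rfl
      · exact hnr hw
      · exact hirr _ hw
    rw [hsplit _ _ (Set.finite_singleton _) ((Set.finite_singleton _).insert _)] at hmem
    obtain ⟨⟨a, ha, b, hb, heq⟩, _⟩ := hmem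
    have ha' : a = v₂ := hsingle _ ha
    have hb' : b = v₁ := hpair hb
    subst ha'; subst hb'
    exact hne heq
end

section
/- Let V be a type with an irreflexive, transitive dominance relation ≻, a combining operator ⊕, and feasibility predicates c₁, c₂, c. If the splitting property holds for all finite sets, i.e. opt_c(merge(Θ₁, Θ₂)) = opt_c(merge(opt_{c₁}(Θ₁), opt_{c₂}(Θ₂))) for all finite Θ₁, Θ₂ ⊆ V, then the constraints propagate anti-monotonically on values: for all v₁, v₂ ∈ V, if ¬c₁(v₁) or ¬c₂(v₂) then ¬c(v₁ ⊕ v₂). (Necessity of anti-monotonicity, from the necessity direction of the proof of Theorem 1, obtained by instantiating the splitting property on singleton sets.) -/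
/-- Necessity of anti-monotonicity (from the necessity direction of the proof of
Theorem 1): if the splitting property holds for all finite sets, then the
constraints propagate anti-monotonically on values. -/
theorem antiMonotonic_of_splitting {V : Type*}
    (r : V → V → Prop) (hirr : ∀ v, ¬ r v v)
    (htrans : ∀ ⦃a b c⦄, r a b → r b c → r a c)
    (op : V → V → V) (c₁ c₂ c : V → Prop)
    (hsplit : ∀ Θ₁ Θ₂ : Set V, Θ₁.Finite → Θ₂.Finite →
      opt r c (merge op Θ₁ Θ₂) =
        opt r c (merge op (opt r c₁ Θ₁) (opt r c₂ Θ₂))) :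
    ∀ v₁ v₂ : V, (¬ c₁ v₁ ∨ ¬ c₂ v₂) → ¬ c (op v₁ v₂) := by
  intro v₁ v₂ hnc hc
  have h := hsplit {v₁} {v₂} (Set.finite_singleton _) (Set.finite_singleton _)
  have hmem : op v₁ v₂ ∈ opt r c (merge op {v₁} {v₂}) := by
    constructor
    · exact ⟨Set.mem_image2_of_mem rfl rfl, hc⟩
    · rintro ⟨v', ⟨hv', -⟩, hr⟩
      simp only [merge, Set.image2_singleton_right, Set.image_singleton,
        Set.mem_singleton_iff] at hv'
      subst hv'
      exact hirr _ hr
  rw [h] at hmem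
  obtain ⟨⟨hv, -⟩, -⟩ := hmem
  obtain ⟨a, ⟨⟨ha, hca⟩, -⟩, b, ⟨⟨hb, hcb⟩, -⟩, -⟩ := hv
  simp only [Set.mem_singleton_iff] at ha hb
  subst ha; subst hb
  rcases hnc with h1 | h2
  · exact h1 hca
  · exact h2 hcb
end

section
/- Let S be a type of states, F a finite type of features, K a finite nonempty type of labels, and V a type of solution values with an irreflexive, transitive dominance relation ≻ and a combining operator ⊕. Let t : S → F → Bool → S be a transition function, g_leaf : S → K → V a leaf-cost function, g_br : S → F → V a branching-cost function, and c : S → V → Prop a state-indexed feasibility constraint; write opt_s(Θ) := nondom({v ∈ Θ | c s v}) and merge_{s,f}(Θ₁, Θ₂) := {v₁ ⊕ v₂ ⊕ g_br(s, f) | v₁ ∈ Θ₁, v₂ ∈ Θ₂}. Define the full solution sets by Θ(s, 0) := {g_leaf(s, k) | k ∈ K} and, for d > 0, Θ(s, d) := ⋃_{f ∈ F} merge_{s,f}(Θ(t s f false, d−1), Θ(t s f true, d−1)); and define the STreeD recursion by T(s, 0) := opt_s(Θ(s, 0)) and, for d > 0, T(s, d) := opt_s(⋃_{f ∈ F} merge_{s,f}(T(t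 s f false, d−1), T(t s f true, d−1))). Assume the per-node splitting property: for every state s, feature f, and all finite sets Θ₁, Θ₂ ⊆ V, opt_s(merge_{s,f}(Θ₁, Θ₂)) = opt_s(merge_{s,f}(opt_{t s f false}(Θ₁), opt_{t s f true}(Θ₂))). Then for every state s and every depth d ≥ 0, T(s, d) = opt_s(Θ(s, d)); i.e., the STreeD dynamic-programming recursion computes exactly the Pareto front of feasible solution values over all decision trees of depth at most d. (Theorem 2 of the paper.) -/
/-- The optimal elements of `Θ` under the state-indexed constraint `c` at state `s`:
`opt_s(Θ) = nondom({v ∈ Θ | c s v})`. -/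
def optS {S V : Type*} (r : V → V → Prop) (c : S → V → Prop) (s : S)
    (Θ : Set V) : Set V :=
  nondom r {v ∈ Θ | c s v}

/-- `merge_{s,f}(Θ₁, Θ₂) = {v₁ ⊕ v₂ ⊕ g_br(s, f) | v₁ ∈ Θ₁, v₂ ∈ Θ₂}`. -/
def mergeSF {S F V : Type*} (op : V → V → V) (gbr : S → F → V) (s : S) (f : F)
    (Θ₁ Θ₂ : Set V) : Set V :=
  {w | ∃ v₁ ∈ Θ₁, ∃ v₂ ∈ Θ₂, w = op (op v₁ v₂) (gbr s f)}

/-- The set `Θ(s, d)` of all solution values of decision trees of depth at most `d`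
rooted at state `s`. -/
def fullSols {S F K V : Type*} (t : S → F → Bool → S) (gleaf : S → K → V)
    (op : V → V → V) (gbr : S → F → V) : ℕ → S → Set V
  | 0, s => Set.range (gleaf s)
  | d + 1, s => ⋃ f : F, mergeSF op gbr s f
      (fullSols t gleaf op gbr d (t s f false))
      (fullSols t gleaf op gbr d (t s f true))

/-- The STreeD dynamic-programming recursion `T(s, d)`. -/
def streed {S F K V : Type*} (t : S → F → Bool → S) (gleaf : S → K → V)
    (op : V → V → V) (gbr : S → F → V) (r : V → V → Prop) (c : S → V → Prop) :
    ℕ → S → Set V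
  | 0, s => optS r c s (Set.range (gleaf s))
  | d + 1, s => optS r c s (⋃ f : F, mergeSF op gbr s f
      (streed t gleaf op gbr r c d (t s f false))
      (streed t gleaf op gbr r c d (t s f true)))

/-!
Induct on the depth. At depth `d + 1` the splitting property and the induction hypothesis give,
feature by feature, `opt_s(merge(T, T)) = opt_s(merge(Θ, Θ))`. It then suffices that `opt_s` of a
union is determined by `opt_s` of its pieces, which holds because dominance is a strict order: in a
finite set, anything dominated at all is dominated by a nondominated element.
-/

section Nondom

variable {V : Type*} {r : V → V → Prop} [IsStrictOrder V r] {Θ : Set V}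

lemma exists_mem_nondom_rel_of_mem_of_rel (hΘ : Θ.Finite) {u v : V} (hu : u ∈ Θ) (huv : r u v) :
    ∃ w ∈ nondom r Θ, r w v := by
  refine (hΘ.wellFoundedOn (r := r)).induction
    (P := fun u => ∀ v, r u v → ∃ w ∈ nondom r Θ, r w v) hu (fun y hy ih v hyv => ?_) v huv
  by_cases hdom : ∃ z ∈ Θ, r z y
  · obtain ⟨z, hz, hzy⟩ := hdom
    exact ih z hz hzy v (_root_.trans hzy hyv)
  · exact ⟨y, ⟨hy, hdom⟩, hyv⟩

lemma nondom_iUnion_nondom {ι : Type*} {A : ι → Set V} (hA : ∀ i, (A i).Finite) :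
    nondom r (⋃ i, nondom r (A i)) = nondom r (⋃ i, A i) := by
  ext v
  simp only [nondom, Set.mem_ofPred_eq, Set.mem_iUnion]
  constructor
  · rintro ⟨⟨i, hvi, -⟩, hnd⟩
    refine ⟨⟨i, hvi⟩, ?_⟩
    rintro ⟨u, ⟨j, huj⟩, huv⟩
    obtain ⟨w, hw, hwv⟩ := exists_mem_nondom_rel_of_mem_of_rel (hA j) huj huv
    exact hnd ⟨w, ⟨j, hw⟩, hwv⟩
  · rintro ⟨⟨i, hvi⟩, hnd⟩
    refine ⟨⟨i, hvi, fun ⟨u, hu, huv⟩ => hnd ⟨u, ⟨i, hu⟩, huv⟩⟩, ?_⟩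
    rintro ⟨u, ⟨j, huj, -⟩, huv⟩
    exact hnd ⟨u, ⟨j, huj⟩, huv⟩

end Nondom

section OptS

variable {S V : Type*} {r : V → V → Prop} {c : S → V → Prop} {s : S}

lemma optS_subset (Θ : Set V) : optS r c s Θ ⊆ Θ :=
  fun _ hv => hv.1.1

lemma optS_iUnion [IsStrictOrder V r] {ι : Type*} {A : ι → Set V} (hA : ∀ i, (A i).Finite) :
    optS r c s (⋃ i, A i) = nondom r (⋃ i, optS r c s (A i)) := by
  have hsep : {v ∈ ⋃ i, A i | c s v} = ⋃ i, {v ∈ A i | c s v} := by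
    ext v
    simp only [Set.mem_ofPred_eq, Set.mem_iUnion]
    tauto
  rw [optS, hsep, ← nondom_iUnion_nondom fun i => (hA i).sep _]
  rfl

lemma optS_iUnion_congr [IsStrictOrder V r] {ι : Type*} {A B : ι → Set V}
    (hA : ∀ i, (A i).Finite) (hB : ∀ i, (B i).Finite)
    (h : ∀ i, optS r c s (A i) = optS r c s (B i)) :
    optS r c s (⋃ i, A i) = optS r c s (⋃ i, B i) := by
  rw [optS_iUnion hA, optS_iUnion hB]
  simp_rw [h]

end OptS

lemma mergeSF_finite {S F V : Type*} (op : V → V → V) (gbr : S → F → V) (s : S) (f : F)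
    {Θ₁ Θ₂ : Set V} (h₁ : Θ₁.Finite) (h₂ : Θ₂.Finite) :
    (mergeSF op gbr s f Θ₁ Θ₂).Finite := by
  have himage : mergeSF op gbr s f Θ₁ Θ₂ =
      Set.image2 (fun v₁ v₂ => op (op v₁ v₂) (gbr s f)) Θ₁ Θ₂ := by
    ext w
    simp [mergeSF, Set.mem_image2, eq_comm]
  exact himage ▸ h₁.image2 _ h₂

lemma fullSols_finite {S F K V : Type*} [Finite F] [Finite K]
    (t : S → F → Bool → S) (gleaf : S → K → V) (op : V → V → V) (gbr : S → F → V) :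
    ∀ (d : ℕ) (s : S), (fullSols t gleaf op gbr d s).Finite
  | 0, _ => Set.finite_range _
  | d + 1, _ => Set.finite_iUnion fun _ =>
      mergeSF_finite op gbr _ _ (fullSols_finite t gleaf op gbr d _)
        (fullSols_finite t gleaf op gbr d _)

theorem streed_eq_opt_fullSols_general {S F K V : Type*}
    [Fintype F] [Fintype K]
    (r : V → V → Prop) (hirr : ∀ v, ¬ r v v)
    (htrans : ∀ ⦃a b c⦄, r a b → r b c → r a c)
    (t : S → F → Bool → S) (gleaf : S → K → V) (op : V → V → V)
    (gbr : S → F → V) (c : S → V → Prop)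
    (hsplit : ∀ (s : S) (f : F) (Θ₁ Θ₂ : Set V), Θ₁.Finite → Θ₂.Finite →
      optS r c s (mergeSF op gbr s f Θ₁ Θ₂) =
        optS r c s (mergeSF op gbr s f
          (optS r c (t s f false) Θ₁) (optS r c (t s f true) Θ₂))) :
    ∀ (s : S) (d : ℕ),
      streed t gleaf op gbr r c d s =
        optS r c s (fullSols t gleaf op gbr d s) := by
  have : IsStrictOrder V r := { irrefl := hirr, trans := htrans }
  intro s d
  induction d generalizing s with
  | zero => rfl
  | succ d ih =>
    have hfull := fullSols_finite t gleaf op gbr d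
    have hstreed (s' : S) : (streed t gleaf op gbr r c d s').Finite :=
      (hfull s').subset (ih s' ▸ optS_subset _)
    refine optS_iUnion_congr (fun f => mergeSF_finite op gbr s f (hstreed _) (hstreed _))
      (fun f => mergeSF_finite op gbr s f (hfull _) (hfull _)) fun f => ?_
    rw [ih, ih, hsplit s f _ _ (hfull _) (hfull _)]

/-- Theorem 2: if the per-node splitting property holds, then the STreeD recursion
computes exactly the Pareto front of feasible solution values over all decision
trees of depth at most `d`. -/
theorem streed_eq_opt_fullSols {S F K V : Type*}
    [Fintype F] [Fintype K] [Nonempty K]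
    (r : V → V → Prop) (hirr : ∀ v, ¬ r v v)
    (htrans : ∀ ⦃a b c⦄, r a b → r b c → r a c)
    (t : S → F → Bool → S) (gleaf : S → K → V) (op : V → V → V)
    (gbr : S → F → V) (c : S → V → Prop)
    (hsplit : ∀ (s : S) (f : F) (Θ₁ Θ₂ : Set V), Θ₁.Finite → Θ₂.Finite →
      optS r c s (mergeSF op gbr s f Θ₁ Θ₂) =
        optS r c s (mergeSF op gbr s f
          (optS r c (t s f false) Θ₁) (optS r c (t s f true) Θ₂))) :
    ∀ (s : S) (d : ℕ),
      streed t gleaf op gbr r c d s =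
        optS r c s (fullSols t gleaf op gbr d s) :=
  streed_eq_opt_fullSols_general r hirr htrans t gleaf op gbr c hsplit
end

section
/- Let V be a type with an irreflexive, transitive dominance relation ≻ and a feasibility predicate c : V → Prop, and define opt(Θ) := nondom({v ∈ Θ | c v}). Then filtering to optima distributes over finite unions: for any finite index set I and finite sets Θᵢ ⊆ V (i ∈ I), opt(⋃_{i ∈ I} Θᵢ) = opt(⋃_{i ∈ I} opt(Θᵢ)). (The identity used in the induction step of the proof of Theorem 2: any solution filtered out of a subset would also be filtered out of the whole set.) -/
lemma exists_nondom_above {V : Type*} (r : V → V → Prop) (hirr : ∀ v, ¬ r v v)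
    (htrans : ∀ ⦃a b c⦄, r a b → r b c → r a c)
    {F : Set V} (hF : F.Finite) {w : V} (hw : w ∈ F) :
    ∃ m ∈ F, (m = w ∨ r m w) ∧ ∀ m' ∈ F, ¬ r m' m := by
  haveI : IsIrrefl V r := ⟨hirr⟩
  haveI : IsTrans V r := ⟨fun _ _ _ h h2 => htrans h h2⟩
  haveI : IsStrictOrder V r := ⟨⟩
  have hwf : WellFounded (fun a b : F => r a b) := hF.wellFoundedOn
  obtain ⟨m, hmS, hmmin⟩ := hwf.has_min {x : F | (x : V) = w ∨ r x w}
    ⟨⟨w, hw⟩, Or.inl rfl⟩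
  refine ⟨m, m.2, hmS, fun m' hm' hr => ?_⟩
  have : r m' w := by
    rcases hmS with h | h
    · rwa [h] at hr
    · exact htrans hr h
  exact hmmin ⟨m', hm'⟩ (Or.inr this) hr

/-- Filtering to optima distributes over finite unions: any solution filtered out
of a subset would also be filtered out of the whole set (used in the induction step
of the proof of Theorem 2). -/
theorem opt_iUnion_eq_opt_iUnion_opt {V ι : Type*} [Fintype ι]
    (r : V → V → Prop) (hirr : ∀ v, ¬ r v v)
    (htrans : ∀ ⦃a b c⦄, r a b → r b c → r a c)
    (c : V → Prop) (Θ : ι → Set V) (hfin : ∀ i, (Θ i).Finite) :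
    opt r c (⋃ i, Θ i) = opt r c (⋃ i, opt r c (Θ i)) := by
  ext v
  simp only [opt, nondom, Set.mem_setOf_eq, Set.mem_iUnion]
  constructor
  · rintro ⟨⟨⟨i, hvi⟩, hcv⟩, hnd⟩
    refine ⟨⟨⟨i, ⟨⟨hvi, hcv⟩, ?_⟩⟩, hcv⟩, ?_⟩
    · rintro ⟨v', ⟨hv'i, hcv'⟩, hr⟩
      exact hnd ⟨v', ⟨⟨i, hv'i⟩, hcv'⟩, hr⟩
    · rintro ⟨v', ⟨⟨j, ⟨⟨hv'j, hcv'⟩, -⟩⟩, -⟩, hr⟩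
      exact hnd ⟨v', ⟨⟨j, hv'j⟩, hcv'⟩, hr⟩
  · rintro ⟨⟨⟨i, ⟨⟨hvi, hcv⟩, hndv⟩⟩, -⟩, hnd⟩
    refine ⟨⟨⟨i, hvi⟩, hcv⟩, ?_⟩
    rintro ⟨w, ⟨⟨j, hwj⟩, hcw⟩, hr⟩
    -- find a nondominated element of the feasible set of Θ j above w
    obtain ⟨m, ⟨hmj, hcm⟩, hmw, hm⟩ :=
      exists_nondom_above r hirr htrans
        ((hfin j).subset (Set.sep_subset _ _) : ({v ∈ Θ j | c v} : Set V).Finite)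
        (show w ∈ {v ∈ Θ j | c v} from ⟨hwj, hcw⟩)
    have hrmv : r m v := by
      rcases hmw with h | h
      · rwa [h]
      · exact htrans h hr
    exact hnd ⟨m, ⟨⟨j, ⟨⟨hmj, hcm⟩, fun ⟨m', hm', hr'⟩ => hm m' hm' hr'⟩⟩, hcm⟩, hrmv⟩
end

section
/- Let V_a and V_b be types with irreflexive, transitive dominance relations ≻_a and ≻_b, and combining operators ⊕_a and ⊕_b such that each is strictly monotone in each argument (x ≻_a x' implies x ⊕_a z ≻_a x' ⊕_a z and z ⊕_a x ≻_a z ⊕_a x', and similarly for ⊕_b) and weakly monotone in each argument (x ≽_a x' implies x ⊕_a z ≽_a x' ⊕_a z and z ⊕_a x ≽_a z ⊕_a x', and similarly for ⊕_b). Define the componentwise combined operator (x, y) ⊕ (z, w) := (x ⊕_a z, y ⊕_b w) and the combined dominance relation (x, y) ≻ (x', y') iff (x, y) ≠ (x', y') ∧ x ≽_a x' ∧ y ≽_b y'. Then the combined operator is strictly monotone with respect to the combined dominance: for all V₁, V₁', V₂ ∈ V_a × V_b with V₁ ≻ V₁', one has V₁ ⊕ V₂ ≻ V₁' ⊕ V₂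 and V₂ ⊕ V₁ ≻ V₂ ⊕ V₁'. (Order-preservation part of the proof of Proposition 3.) -/
/-- The combined dominance relation on pairs (Eq. 16 of the paper). -/
def combinedDom {Va Vb : Type*} (ra : Va → Va → Prop) (rb : Vb → Vb → Prop)
    (p q : Va × Vb) : Prop :=
  p ≠ q ∧ (ra p.1 q.1 ∨ p.1 = q.1) ∧ (rb p.2 q.2 ∨ p.2 = q.2)

/-- The componentwise combined combining operator (Eq. 17 of the paper). -/
def combinedOp {Va Vb : Type*} (opa : Va → Va → Va) (opb : Vb → Vb → Vb)
    (p q : Va × Vb) : Va × Vb :=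
  (opa p.1 q.1, opb p.2 q.2)

/-- Order-preservation part of the proof of Proposition 3: if both component
operators are strictly and weakly monotone in each argument, then the combined
operator is strictly monotone with respect to the combined dominance relation. -/
theorem combinedOp_strictMono {Va Vb : Type*}
    (ra : Va → Va → Prop) (hirra : ∀ x, ¬ ra x x)
    (htransa : ∀ ⦃x y z⦄, ra x y → ra y z → ra x z)
    (rb : Vb → Vb → Prop) (hirrb : ∀ y, ¬ rb y y)
    (htransb : ∀ ⦃x y z⦄, rb x y → rb y z → rb x z)
    (opa : Va → Va → Va) (opb : Vb → Vb → Vb)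
    (hstricta : ∀ x x' z : Va, ra x x' → ra (opa x z) (opa x' z) ∧ ra (opa z x) (opa z x'))
    (hstrictb : ∀ y y' w : Vb, rb y y' → rb (opb y w) (opb y' w) ∧ rb (opb w y) (opb w y'))
    (hweaka : ∀ x x' z : Va, (ra x x' ∨ x = x') →
      (ra (opa x z) (opa x' z) ∨ opa x z = opa x' z) ∧
      (ra (opa z x) (opa z x') ∨ opa z x = opa z x'))
    (hweakb : ∀ y y' w : Vb, (rb y y' ∨ y = y') →
      (rb (opb y w) (opb y' w) ∨ opb y w = opb y' w) ∧
      (rb (opb w y) (opb w y') ∨ opb w y = opb w y')) :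
    ∀ V₁ V₁' V₂ : Va × Vb, combinedDom ra rb V₁ V₁' →
      combinedDom ra rb (combinedOp opa opb V₁ V₂) (combinedOp opa opb V₁' V₂) ∧
      combinedDom ra rb (combinedOp opa opb V₂ V₁) (combinedOp opa opb V₂ V₁') := by
  rintro ⟨x, y⟩ ⟨x', y'⟩ ⟨z, w⟩ ⟨hne, ha, hb⟩
  simp only [combinedDom, combinedOp, Prod.mk.injEq, ne_eq, Prod.ext_iff] at *
  have hstrict : ra x x' ∨ rb y y' := by
    rcases ha with ha | ha
    · exact Or.inl ha
    · rcases hb with hb | hb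
      · exact Or.inr hb
      · exact absurd ⟨ha, hb⟩ hne
  refine ⟨⟨?_, (hweaka x x' z ha).1, (hweakb y y' w hb).1⟩,
          ⟨?_, (hweaka x x' z ha).2, (hweakb y y' w hb).2⟩⟩
  · rintro ⟨h1, h2⟩
    rcases hstrict with h | h
    · exact hirra _ (h1 ▸ (hstricta x x' z h).1)
    · exact hirrb _ (h2 ▸ (hstrictb y y' w h).1)
  · rintro ⟨h1, h2⟩
    rcases hstrict with h | h
    · exact hirra _ (h1 ▸ (hstricta x x' z h).2)
    · exact hirrb _ (h2 ▸ (hstrictb y y' w h).2)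
end
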